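/- arXiv:2006.03076 — 2 statements merged into one kernel-verified Lean document; each statement's English description precedes it below -/
import Mathlib

section
/- Let α²(λ), ρ²(λ) solve the Yamabe flow system dα²/dλ = A + B·α²/ρ², dρ²/dλ = B + A·ρ²/α² with A = 2d(d-1)/(d+p), B = -2p(p-1)/(d+p), and initial condition α²(0) = C₀ρ₀². Then α²(λ) = C₀ρ₀² + (A + B·C₀)λ and ρ²(λ) = ρ₀² + (B + A/C₀)λ. -/
/-!
The flow preserves the ratio `α²/ρ²`: the right-hand sides satisfy
`(α²)' ρ² = A ρ² + B α² = α² (ρ²)'`, hence the quotient has zero derivative and stays at its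
initial value `C₀`. Substituting `α²/ρ² = C₀` gives both equations constant right-hand sides,
so both squared radii are affine in `λ`.
-/

section ConstantDerivative

variable {𝕜 : Type*} [RCLike 𝕜]

theorem eq_add_smul_of_hasDerivAt_const {G : Type*} [NormedAddCommGroup G] [NormedSpace 𝕜 G]
    {f : 𝕜 → G} {c : G} (hf : ∀ x, HasDerivAt f c x) (x : 𝕜) : f x = f 0 + x • c := by
  have hdrift : ∀ y, HasDerivAt (fun y => f y - y • c) 0 y := fun y => by
    simpa using (hf y).fun_sub ((hasDerivAt_id y).smul_const c)
  have := is_const_of_deriv_eq_zero (fun y => (hdrift y).differentiableAt)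
    (fun y => (hdrift y).deriv) x 0
  rw [zero_smul, sub_zero] at this
  rw [← this, sub_add_cancel]

theorem div_eq_div_of_deriv_mul_eq_mul_deriv {f g f' g' : 𝕜 → 𝕜}
    (hf : ∀ x, HasDerivAt f (f' x) x) (hg : ∀ x, HasDerivAt g (g' x) x) (hg0 : ∀ x, g x ≠ 0)
    (hfg : ∀ x, f' x * g x = f x * g' x) (x y : 𝕜) : f x / g x = f y / g y := by
  have hquot : ∀ x, HasDerivAt (f / g) 0 x := fun x => by
    simpa [hfg x] using (hf x).div (hg x) (hg0 x)
  exact is_const_of_deriv_eq_zero (fun x => (hquot x).differentiableAt)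
    (fun x => (hquot x).deriv) x y

end ConstantDerivative

theorem yamabe_flow_solution_general (C₀ ρ0sq : ℝ) (αsq ρsq : ℝ → ℝ)
    (A B : ℝ)
    (hαpos : ∀ l : ℝ, 0 < αsq l) (hρpos : ∀ l : ℝ, 0 < ρsq l)
    (hρ0 : ρsq 0 = ρ0sq) (hα0 : αsq 0 = C₀ * ρ0sq)
    (hαdiff : ∀ l : ℝ, HasDerivAt αsq (A + B * (αsq l / ρsq l)) l)
    (hρdiff : ∀ l : ℝ, HasDerivAt ρsq (B + A * (ρsq l / αsq l)) l) :
    ∀ l : ℝ, αsq l = C₀ * ρ0sq + (A + B * C₀) * l ∧ ρsq l = ρ0sq + (B + A / C₀) * l := by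
  have hcross : ∀ l, (A + B * (αsq l / ρsq l)) * ρsq l = αsq l * (B + A * (ρsq l / αsq l)) :=
    fun l => by
      field_simp [(hαpos l).ne', (hρpos l).ne']
      ring
  have hratio : ∀ l, αsq l / ρsq l = C₀ := fun l => by
    rw [div_eq_div_of_deriv_mul_eq_mul_deriv hαdiff hρdiff (fun x => (hρpos x).ne') hcross l 0,
      hα0, hρ0, mul_div_cancel_right₀ _ (hρ0 ▸ (hρpos 0).ne')]
  have hratio_inv : ∀ l, ρsq l / αsq l = C₀⁻¹ := fun l => by rw [← hratio l, inv_div]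
  have hαrate : ∀ l, HasDerivAt αsq (A + B * C₀) l := fun l => hratio l ▸ hαdiff l
  have hρrate : ∀ l, HasDerivAt ρsq (B + A / C₀) l := fun l => by
    simpa only [hratio_inv l, ← div_eq_mul_inv] using hρdiff l
  intro l
  constructor
  · rw [eq_add_smul_of_hasDerivAt_const hαrate l, hα0, smul_eq_mul, mul_comm l]
  · rw [eq_add_smul_of_hasDerivAt_const hρrate l, hρ0, smul_eq_mul, mul_comm l]

/-- Yamabe flow of `AdS_d(α) × S^p(ρ)` with `A = 2d(d-1)/(d+p)`, `B = -2p(p-1)/(d+p)`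
and initial condition `α²(0) = C₀ ρ₀²`: the squared radii evolve linearly,
`α²(λ) = C₀ρ₀² + (A + B C₀)λ` and `ρ²(λ) = ρ₀² + (B + A/C₀)λ`. -/
theorem yamabe_flow_solution (d p C₀ ρ0sq : ℝ) (αsq ρsq : ℝ → ℝ)
    (A B : ℝ) (hA : A = 2 * d * (d - 1) / (d + p)) (hB : B = -(2 * p * (p - 1)) / (d + p))
    (hαpos : ∀ l : ℝ, 0 < αsq l) (hρpos : ∀ l : ℝ, 0 < ρsq l)
    (hC₀ : 0 < C₀) (hρ0 : ρsq 0 = ρ0sq) (hα0 : αsq 0 = C₀ * ρ0sq)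
    (hαdiff : ∀ l : ℝ, HasDerivAt αsq (A + B * (αsq l / ρsq l)) l)
    (hρdiff : ∀ l : ℝ, HasDerivAt ρsq (B + A * (ρsq l / αsq l)) l) :
    ∀ l : ℝ, αsq l = C₀ * ρ0sq + (A + B * C₀) * l ∧ ρsq l = ρ0sq + (B + A / C₀) * l :=
  yamabe_flow_solution_general C₀ ρ0sq αsq ρsq A B hαpos hρpos hρ0 hα0 hαdiff hρdiff
end

section
/- For a Schwarzschild-AdS₄ black hole with β(r₊) = 4πα²r₊/(α² + 3r₊²) and action difference ΔI(r₊) = πr₊²(α² - r₊²)/(α² + 3r₊²), treating ΔI as a function of β through r₊ on the large black hole branch, one has d(ΔI)/dβ = M and β·M - ΔI = πr₊², where M = (r₊/2)(1 + r₊²/α²). That is, the mean energy is the black hole mass and the entropy equals one quarter of the horizon area 4πr₊². -/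
open Real

/-! Both claims are identities between rational functions of `r₊`. The first law reads
`ΔI'(r₊) = M(r₊) β'(r₊)`, and `β'(r₊)` vanishes only at `3r₊² = α²`, the minimal black hole
separating the two branches, which the large branch avoids. -/

noncomputable section

namespace SchwarzschildAdS

def inverseTemperature (α r : ℝ) : ℝ := 4 * π * α ^ 2 * r / (α ^ 2 + 3 * r ^ 2)

def actionDifference (α r : ℝ) : ℝ := π * r ^ 2 * (α ^ 2 - r ^ 2) / (α ^ 2 + 3 * r ^ 2)

def mass (α r : ℝ) : ℝ := r / 2 * (1 + r ^ 2 / α ^ 2)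

variable {α : ℝ}

lemma sq_add_three_mul_sq_pos (hα : α ≠ 0) (r : ℝ) : 0 < α ^ 2 + 3 * r ^ 2 := by positivity

lemma hasDerivAt_inverseTemperature (hα : α ≠ 0) (r : ℝ) :
    HasDerivAt (inverseTemperature α)
      (4 * π * α ^ 2 * (α ^ 2 - 3 * r ^ 2) / (α ^ 2 + 3 * r ^ 2) ^ 2) r := by
  have hD := (sq_add_three_mul_sq_pos hα r).ne'
  refine (((hasDerivAt_id r).const_mul (4 * π * α ^ 2)).div
    ((hasDerivAt_const r (α ^ 2)).add ((hasDerivAt_pow 2 r).const_mul 3)) hD).congr_deriv ?_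
  simp only [Pi.add_apply, id]
  field_simp
  ring

lemma hasDerivAt_actionDifference (hα : α ≠ 0) (r : ℝ) :
    HasDerivAt (actionDifference α)
      (mass α r * (4 * π * α ^ 2 * (α ^ 2 - 3 * r ^ 2) / (α ^ 2 + 3 * r ^ 2) ^ 2)) r := by
  have hD := (sq_add_three_mul_sq_pos hα r).ne'
  refine ((((hasDerivAt_pow 2 r).const_mul π).mul
    ((hasDerivAt_const r (α ^ 2)).sub (hasDerivAt_pow 2 r))).div
    ((hasDerivAt_const r (α ^ 2)).add ((hasDerivAt_pow 2 r).const_mul 3)) hD).congr_deriv ?_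
  simp only [mass, Pi.add_apply, Pi.sub_apply, Pi.mul_apply]
  field_simp
  ring

lemma deriv_actionDifference_div_deriv_inverseTemperature (hα : α ≠ 0) {r : ℝ}
    (hr : α ^ 2 ≠ 3 * r ^ 2) :
    deriv (actionDifference α) r / deriv (inverseTemperature α) r = mass α r := by
  have hβ' : 4 * π * α ^ 2 * (α ^ 2 - 3 * r ^ 2) / (α ^ 2 + 3 * r ^ 2) ^ 2 ≠ 0 := by
    have := (sq_add_three_mul_sq_pos hα r).ne'
    have := sub_ne_zero.mpr hr
    positivity
  rw [(hasDerivAt_actionDifference hα r).deriv, (hasDerivAt_inverseTemperature hα r).deriv,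
    mul_div_cancel_right₀ _ hβ']

lemma inverseTemperature_mul_mass_sub_actionDifference (hα : α ≠ 0) (r : ℝ) :
    inverseTemperature α r * mass α r - actionDifference α r = π * r ^ 2 := by
  have := (sq_add_three_mul_sq_pos hα r).ne'
  simp only [inverseTemperature, mass, actionDifference]
  field_simp
  ring

lemma sq_lt_three_mul_sq_of_div_sqrt_three_lt (hα : 0 < α) {r : ℝ} (hr : α / √3 < r) :
    α ^ 2 < 3 * r ^ 2 := by
  have hα' : α < √3 * r := by rwa [div_lt_iff₀' (by positivity)] at hr
  calc α ^ 2 < (√3 * r) ^ 2 := pow_lt_pow_left₀ hα' hα.le two_ne_zero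
    _ = 3 * r ^ 2 := by rw [mul_pow, sq_sqrt zero_le_three]

end SchwarzschildAdS

end

open SchwarzschildAdS in
/-- Euclidean thermodynamics of Schwarzschild-AdS₄: with inverse temperature
`β(r₊) = 4πα²r₊/(α² + 3r₊²)`, action difference
`ΔI(r₊) = πr₊²(α² - r₊²)/(α² + 3r₊²)` and mass `M = (r₊/2)(1 + r₊²/α²)`, on the
large black hole branch one has `d(ΔI)/dβ = (dΔI/dr₊)/(dβ/dr₊) = M` and
`β M - ΔI = πr₊²` (i.e. `⟨E⟩ = M` and `S = A/4` with `A = 4πr₊²`). -/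
theorem sads_thermodynamics (α r : ℝ) (hα : 0 < α) (hr : α / Real.sqrt 3 < r) :
    (deriv (fun s : ℝ => π * s ^ 2 * (α ^ 2 - s ^ 2) / (α ^ 2 + 3 * s ^ 2)) r) /
      (deriv (fun s : ℝ => 4 * π * α ^ 2 * s / (α ^ 2 + 3 * s ^ 2)) r) =
      r / 2 * (1 + r ^ 2 / α ^ 2) ∧
    4 * π * α ^ 2 * r / (α ^ 2 + 3 * r ^ 2) * (r / 2 * (1 + r ^ 2 / α ^ 2)) -
      π * r ^ 2 * (α ^ 2 - r ^ 2) / (α ^ 2 + 3 * r ^ 2) = π * r ^ 2 := by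
  have hlarge := sq_lt_three_mul_sq_of_div_sqrt_three_lt hα hr
  exact ⟨deriv_actionDifference_div_deriv_inverseTemperature hα.ne' hlarge.ne,
    inverseTemperature_mul_mass_sub_actionDifference hα.ne' r⟩
end
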